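/- arXiv:2407.17682 — 2 statements merged into one kernel-verified Lean document; each statement's English description precedes it below -/
import Mathlib

section
/- Let X be a finite nonempty set, E ⊆ X × X strongly connected, and f : X × X → ℝ nonnegative with support exactly E. Suppose (κ, ψ) and (κ′, ψ′), with κ, κ′ : X → ℝ and ψ, ψ′ ∈ ℝ, are both such that (x,y) ↦ f(x,y)·exp(κ(y) − κ(x) − ψ) and (x,y) ↦ f(x,y)·exp(κ′(y) − κ′(x) − ψ′) are Markov kernels on X. Then ψ = ψ′ and there is a constant c ∈ ℝ with κ′(x) = κ(x) + c for all x ∈ X. -/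
open scoped Classical
open Finset

/-- A (row-stochastic) Markov kernel on a finite set `X`: `w x y` means `w(y|x)`. -/
def IsMarkovKernel {X : Type*} [Fintype X] (w : X → X → ℝ) : Prop :=
  (∀ x y : X, 0 ≤ w x y) ∧ ∀ x : X, ∑ y : X, w x y = 1

/-- The directed graph `(X, E)` is strongly connected: from any `x` there is a
finite directed path along edges of `E` to any `y`. -/
def StronglyConnected {X : Type*} (E : Set (X × X)) : Prop :=
  ∀ x y : X, Relation.ReflTransGen (fun a b => (a, b) ∈ E) x y

/-- Membership in `W(X,E)`: a Markov kernel whose support is exactly `E`. -/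
def MemW {X : Type*} [Fintype X] (E : Set (X × X)) (w : X → X → ℝ) : Prop :=
  IsMarkovKernel w ∧ ∀ x y : X, 0 < w x y ↔ (x, y) ∈ E

/-- `p` is a stationary probability distribution of the kernel `w`. -/
def IsStationaryDistr {X : Type*} [Fintype X] (w : X → X → ℝ) (p : X → ℝ) : Prop :=
  (∀ x : X, 0 ≤ p x) ∧ (∑ x : X, p x = 1) ∧ ∀ y : X, ∑ x : X, p x * w x y = p y

/-- The stationary distribution `p_w` of `w` (unique for `w ∈ W(X,E)` with
`(X,E)` strongly connected), obtained by choice from existence. -/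
noncomputable def statDist {X : Type*} [Fintype X] (w : X → X → ℝ) : X → ℝ :=
  if h : ∃ p : X → ℝ, IsStationaryDistr w p then h.choose else fun _ => 0

/-- The divergence rate `D(v|w) = Σ_{(x,y)∈E} p_v(x) v(y|x) log (v(y|x)/w(y|x))`. -/
noncomputable def divRate {X : Type*} [Fintype X] (E : Set (X × X))
    (v w : X → X → ℝ) : ℝ :=
  ∑ x : X, ∑ y : X,
    if (x, y) ∈ E then statDist v x * v x y * Real.log (v x y / w x y) else 0

/-- `F_1, …, F_K` are linearly independent modulo
`N = {(x,y) ↦ κ(y) − κ(x) − c}` (as functions on `E`). -/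
def LinIndepModN {X : Type*} (E : Set (X × X)) {K : ℕ} (F : Fin K → X → X → ℝ) : Prop :=
  ∀ a : Fin K → ℝ,
    (∃ (κ : X → ℝ) (c : ℝ), ∀ x y : X, (x, y) ∈ E →
      ∑ k : Fin K, a k * F k x y = κ y - κ x - c) →
    a = 0

/-- Membership in the exponential family generated by `C, F_1, …, F_K`. -/
def MemExpFam {X : Type*} [Fintype X] (E : Set (X × X)) {K : ℕ}
    (C : X → X → ℝ) (F : Fin K → X → X → ℝ) (w : X → X → ℝ) : Prop :=
  MemW E w ∧ ∃ (θ : Fin K → ℝ) (κ : X → ℝ) (ψ : ℝ), ∀ x y : X, (x, y) ∈ E →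
    w x y = Real.exp (C x y + ∑ k : Fin K, θ k * F k x y + κ y - κ x - ψ)

/-- Membership in the mixture family `M(μ_1,…,μ_K)`:
`Σ_{(x,y)∈E} p_w(x) w(y|x) F_k(x,y) = μ_k` for all `k`. -/
def MemMix {X : Type*} [Fintype X] (E : Set (X × X)) {K : ℕ}
    (F : Fin K → X → X → ℝ) (μ : Fin K → ℝ) (w : X → X → ℝ) : Prop :=
  MemW E w ∧ ∀ k : Fin K,
    (∑ x : X, ∑ y : X, if (x, y) ∈ E then statDist w x * w x y * F k x y else 0) = μ k


/-- uniqueness of psi, and of kappa up to an additive constant. -/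
theorem stmt_1 {X : Type*} [Fintype X] [Nonempty X] (E : Set (X × X))
    (hE : StronglyConnected E) (f : X → X → ℝ)
    (hf0 : ∀ x y : X, 0 ≤ f x y)
    (hsupp : ∀ x y : X, 0 < f x y ↔ (x, y) ∈ E)
    (κ κ' : X → ℝ) (ψ ψ' : ℝ)
    (h1 : IsMarkovKernel (fun x y => f x y * Real.exp (κ y - κ x - ψ)))
    (h2 : IsMarkovKernel (fun x y => f x y * Real.exp (κ' y - κ' x - ψ'))) :
    ψ = ψ' ∧ ∃ c : ℝ, ∀ x : X, κ' x = κ x + c := by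
  set g : X → ℝ := fun x => κ' x - κ x with hg
  set w : X → X → ℝ := fun x y => f x y * Real.exp (κ y - κ x - ψ) with hw
  have hwnn : ∀ x y, 0 ≤ w x y := h1.1
  have hwsum : ∀ x, ∑ y, w x y = 1 := h1.2
  have hwpos : ∀ x y, (x, y) ∈ E → 0 < w x y := by
    intro x y hxy
    exact mul_pos ((hsupp x y).2 hxy) (Real.exp_pos _)
  have hkey : ∀ x : X, ∑ y, w x y * Real.exp (g y) =
      Real.exp (g x + (ψ' - ψ)) := by
    intro x
    have h2x := h2.2 x
    have : ∀ y : X, w x y * Real.exp (g y) =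
        Real.exp (g x + (ψ' - ψ)) * (f x y * Real.exp (κ' y - κ' x - ψ')) := by
      intro y
      simp only [hw, hg]
      rw [mul_assoc, ← Real.exp_add, mul_comm (Real.exp _), mul_assoc, ← Real.exp_add]
      ring_nf
    rw [Finset.sum_congr rfl (fun y _ => this y), ← Finset.mul_sum, h2x, mul_one]
  -- maximizer
  obtain ⟨x₀, -, hx₀⟩ := Finset.exists_max_image Finset.univ g ⟨Classical.arbitrary X,
    Finset.mem_univ _⟩
  have hx₀' : ∀ z : X, g z ≤ g x₀ := fun z => hx₀ z (Finset.mem_univ z)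
  obtain ⟨x₁, -, hx₁⟩ := Finset.exists_min_image Finset.univ g ⟨Classical.arbitrary X,
    Finset.mem_univ _⟩
  have hx₁' : ∀ z : X, g x₁ ≤ g z := fun z => hx₁ z (Finset.mem_univ z)
  have hle : ∑ y, w x₀ y * Real.exp (g y) ≤ Real.exp (g x₀) := by
    calc ∑ y, w x₀ y * Real.exp (g y) ≤ ∑ y, w x₀ y * Real.exp (g x₀) := by
          apply Finset.sum_le_sum
          intro y _
          exact mul_le_mul_of_nonneg_left (Real.exp_le_exp.2 (hx₀' y)) (hwnn _ _)
      _ = Real.exp (g x₀) := by rw [← Finset.sum_mul, hwsum, one_mul]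
  have hgel : Real.exp (g x₁) ≤ ∑ y, w x₁ y * Real.exp (g y) := by
    calc Real.exp (g x₁) = ∑ y, w x₁ y * Real.exp (g x₁) := by
          rw [← Finset.sum_mul, hwsum, one_mul]
      _ ≤ ∑ y, w x₁ y * Real.exp (g y) := by
          apply Finset.sum_le_sum
          intro y _
          exact mul_le_mul_of_nonneg_left (Real.exp_le_exp.2 (hx₁' y)) (hwnn _ _)
  have hδ1 : ψ' - ψ ≤ 0 := by
    have := hle
    rw [hkey x₀] at this
    have := Real.exp_le_exp.1 this
    linarith
  have hδ2 : 0 ≤ ψ' - ψ := by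
    have := hgel
    rw [hkey x₁] at this
    have := Real.exp_le_exp.1 this
    linarith
  have hψ : ψ = ψ' := by linarith
  -- now constancy of g : any point with maximal g passes maximality along edges
  have hprop : ∀ x : X, (∀ z, g z ≤ g x) → ∀ y : X, (x, y) ∈ E → g y = g x := by
    intro x hx y hxy
    have heq : ∑ z, w x z * (Real.exp (g x) - Real.exp (g z)) = 0 := by
      have := hkey x
      rw [show ψ' - ψ = 0 by linarith, add_zero] at this
      have hsum : ∑ z, w x z * Real.exp (g x) = Real.exp (g x) := by
        rw [← Finset.sum_mul, hwsum, one_mul]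
      calc ∑ z, w x z * (Real.exp (g x) - Real.exp (g z))
          = (∑ z, w x z * Real.exp (g x)) - ∑ z, w x z * Real.exp (g z) := by
            rw [← Finset.sum_sub_distrib]; apply Finset.sum_congr rfl; intros; ring
        _ = 0 := by rw [hsum, this, sub_self]
    have hnn : ∀ z ∈ Finset.univ, 0 ≤ w x z * (Real.exp (g x) - Real.exp (g z)) := by
      intro z _
      exact mul_nonneg (hwnn _ _) (by linarith [Real.exp_le_exp.2 (hx z)])
    have := (Finset.sum_eq_zero_iff_of_nonneg hnn).1 heq y (Finset.mem_univ y)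
    have hwpos' := hwpos x y hxy
    have : Real.exp (g x) - Real.exp (g y) = 0 := by
      rcases mul_eq_zero.1 this with h | h
      · exact absurd h (ne_of_gt hwpos')
      · exact h
    exact (Real.exp_injective (by linarith : Real.exp (g x) = Real.exp (g y))).symm
  have hconst : ∀ y : X, g y = g x₀ := by
    intro y
    have hrt := hE x₀ y
    induction hrt with
    | refl => rfl
    | tail hab hbc ih =>
        rename_i b c
        have hb : ∀ z, g z ≤ g b := fun z => ih ▸ hx₀' z
        exact (hprop b hb c hbc).trans ih
  refine ⟨hψ, g x₀, fun x => ?_⟩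
  have := hconst x
  simp only [hg] at this
  show κ' x = κ x + (κ' x₀ - κ x₀)
  linarith
end

section
/- Let X be a finite nonempty set, E ⊆ X × X strongly connected, and C, F_1, …, F_K : E → ℝ with F_1, …, F_K linearly independent modulo N. Suppose θ, θ′ ∈ ℝ^K, κ, κ′ : X → ℝ and ψ, ψ′ ∈ ℝ are such that w(y|x) = exp(C(x,y) + Σ_k θ_k F_k(x,y) + κ(y) − κ(x) − ψ) and w′(y|x) = exp(C(x,y) + Σ_k θ′_k F_k(x,y) + κ′(y) − κ′(x) − ψ′), extended by 0 off E, are both Markov kernels on X. If w = w′ then θ = θ′. In other words, the map θ ↦ w_θ of the exponential family generated by C, F_1, …, F_K is injective. -/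
open scoped Classical
open Finset

/-- injectivity of the natural parameter of the exponential family. -/
theorem stmt_3 {X : Type*} [Fintype X] [Nonempty X] (E : Set (X × X))
    (hE : StronglyConnected E) (K : ℕ)
    (C : X → X → ℝ) (F : Fin K → X → X → ℝ) (hF : LinIndepModN E F)
    (θ θ' : Fin K → ℝ) (κ κ' : X → ℝ) (ψ ψ' : ℝ)
    (h1 : IsMarkovKernel (fun x y => if (x, y) ∈ E then
        Real.exp (C x y + ∑ k : Fin K, θ k * F k x y + κ y - κ x - ψ) else 0))
    (h2 : IsMarkovKernel (fun x y => if (x, y) ∈ E then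
        Real.exp (C x y + ∑ k : Fin K, θ' k * F k x y + κ' y - κ' x - ψ') else 0))
    (heq : ∀ x y : X,
      (if (x, y) ∈ E then
        Real.exp (C x y + ∑ k : Fin K, θ k * F k x y + κ y - κ x - ψ) else 0) =
      (if (x, y) ∈ E then
        Real.exp (C x y + ∑ k : Fin K, θ' k * F k x y + κ' y - κ' x - ψ') else 0)) :
    θ = θ' := by
  have h := hF (θ - θ') ⟨κ' - κ, ψ' - ψ, fun x y hxy => by
    have := heq x y
    rw [if_pos hxy, if_pos hxy] at this
    have hexp := Real.exp_injective this
    simp only [Pi.sub_apply, sub_mul, Finset.sum_sub_distrib]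
    linarith⟩
  exact sub_eq_zero.mp h
end
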